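/- In the game i-Mark({2,4},{2}), for any position n = 6q with q ≥ 2, g(n) = 3 if and only if q ≥ 4 is even and either: q is a power of 2 with even 2-adic valuation, or q is not a power of 2 and has odd 2-adic valuation. -/

import Mathlib

/-- The minimum excludant of a finite set of naturals. -/
noncomputable def mex (s : Finset ℕ) : ℕ := sInf {k : ℕ | k ∉ s}

/-- Options of the game i-Mark(S,D) from a heap of `n` tokens:
move to `n - s` for `s ∈ S` (with `1 ≤ s ≤ n`), or to `n / d` for `d ∈ D`
(with `2 ≤ d` and `d ∣ n`, `n ≥ 1`). -/
def iMarkOptions (S D : Finset ℕ) (n : ℕ) : Finset ℕ :=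
  ((S.filter (fun s => 1 ≤ s ∧ s ≤ n)).image (fun s => n - s)) ∪
  ((D.filter (fun d => 2 ≤ d ∧ d ∣ n ∧ 1 ≤ n)).image (fun d => n / d))

theorem iMarkOptions_lt {S D : Finset ℕ} {n m : ℕ} (h : m ∈ iMarkOptions S D n) : m < n := by
  simp only [iMarkOptions, Finset.mem_union, Finset.mem_image, Finset.mem_filter] at h
  rcases h with ⟨s, ⟨_, h1, h2⟩, rfl⟩ | ⟨d, ⟨_, h2, hd, hn⟩, rfl⟩
  · omega
  · exact Nat.div_lt_self hn h2

/-- The Sprague-Grundy value of a heap of `n` tokens in the game i-Mark(S,D). -/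
noncomputable def grundy (S D : Finset ℕ) (n : ℕ) : ℕ :=
  mex ((iMarkOptions S D n).attach.image (fun m => grundy S D m.1))
termination_by n
decreasing_by exact iMarkOptions_lt m.2

/-- `misereP S D n` means `n` is a P-position of i-Mark(S,D) under misère convention:
`n` has at least one option and every option is an N-position. -/
def misereP (S D : Finset ℕ) (n : ℕ) : Prop :=
  (iMarkOptions S D n).Nonempty ∧
    ∀ m : {x // x ∈ iMarkOptions S D n}, ¬ misereP S D m.1
termination_by n
decreasing_by exact iMarkOptions_lt m.2

/-! Since the mex recursion determines the Grundy function, it suffices to exhibit a closed form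
satisfying it. Away from the exceptional values `g 4 = 2` and `g 10 = 3`, `g` takes the values
`0, 1, 1, 0, 2` on the residues `1, …, 5` mod 6, and `g (6 * k) ∈ {2, 3}` for `k ≥ 2`. The options
of `6 * k` carry the values `0`, `1` and `g (3 * k)`, so `g (6 * k) = 2` for odd `k` while
`g (12 * t) = 5 - g (6 * t)`. Writing `q = 2 ^ a * u` with `u` odd, `g (6 * q) = 3` therefore holds
exactly when `a ≥ 1` and the parity of `a` records whether `u = 1`. -/

theorem mex_eq_of_notMem_of_forall_lt_mem {s : Finset ℕ} {v : ℕ} (hv : v ∉ s)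
    (hlt : ∀ k < v, k ∈ s) : mex s = v :=
  IsLeast.csInf_eq ⟨hv, fun _ hk => not_lt.1 fun h => hk (hlt _ h)⟩

theorem grundy_eq_mex (S D : Finset ℕ) (n : ℕ) :
    grundy S D n = mex ((iMarkOptions S D n).image (grundy S D)) := by
  rw [grundy]
  congr 1
  ext x
  simp

theorem eq_grundy_of_forall_eq_mex {S D : Finset ℕ} {f : ℕ → ℕ}
    (hf : ∀ n, f n = mex ((iMarkOptions S D n).image f)) : f = grundy S D := by
  funext n
  induction n using Nat.strong_induction_on with
  | _ n ih =>
    rw [hf, grundy_eq_mex]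
    congr 1
    exact Finset.image_congr fun m hm => ih m (iMarkOptions_lt hm)

theorem iMarkOptions_24_2_of_even {n : ℕ} (hn : 4 ≤ n) (he : Even n) :
    iMarkOptions {2, 4} {2} n = {n - 2, n - 4, n / 2} := by
  ext m
  simp [iMarkOptions, or_and_right, exists_or, he.two_dvd]
  omega

theorem iMarkOptions_24_2_of_odd {n : ℕ} (hn : 4 ≤ n) (ho : Odd n) :
    iMarkOptions {2, 4} {2} n = {n - 2, n - 4} := by
  ext m
  simp [iMarkOptions, or_and_right, exists_or, ho.not_two_dvd_nat]
  omega

def GrundyThreeCriterion (q : ℕ) : Prop :=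
  4 ≤ q ∧ Even q ∧
    ((ordCompl[2] q = 1 ∧ Even (padicValNat 2 q)) ∨ (ordCompl[2] q ≠ 1 ∧ Odd (padicValNat 2 q)))

theorem not_grundyThreeCriterion_of_odd {q : ℕ} (hq : Odd q) : ¬ GrundyThreeCriterion q :=
  fun h => Nat.not_even_iff_odd.mpr hq h.2.1

theorem grundyThreeCriterion_two_pow_mul {a u : ℕ} (hu : Odd u) :
    GrundyThreeCriterion (2 ^ a * u) ↔ 1 ≤ a ∧ (u = 1 ↔ Even a) := by
  have hu2 : ¬ 2 ∣ u := hu.not_two_dvd_nat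
  have hcompl : ordCompl[2] (2 ^ a * u) = u :=
    Nat.ordCompl_pow_mul_of_not_dvd a Nat.prime_two hu2
  have hval : padicValNat 2 (2 ^ a * u) = a := by
    rw [padicValNat.mul (by positivity) hu.pos.ne', padicValNat.prime_pow,
      padicValNat.eq_zero_of_not_dvd hu2, add_zero]
  rw [GrundyThreeCriterion, hcompl, hval, ← Nat.not_even_iff_odd]
  obtain rfl | ha := Nat.eq_zero_or_pos a
  · simp [Nat.even_iff, Nat.odd_iff.mp hu]
  have heven : Even (2 ^ a * u) := (Nat.even_pow.mpr ⟨even_two, ha.ne'⟩).mul_right u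
  have hfour : (u = 1 ↔ Even a) → 4 ≤ 2 ^ a * u := by
    intro h
    obtain rfl | hu3 : u = 1 ∨ 3 ≤ u := by obtain ⟨k, rfl⟩ := hu; omega
    · obtain ⟨b, rfl⟩ := h.mp rfl
      calc 4 = 2 ^ 2 := by norm_num
        _ ≤ 2 ^ (b + b) := Nat.pow_le_pow_right two_pos (by omega)
        _ = 2 ^ (b + b) * 1 := (mul_one _).symm
    · calc 4 ≤ 2 * 3 := by norm_num
        _ ≤ 2 ^ a * u := Nat.mul_le_mul (Nat.le_self_pow ha.ne' 2) hu3
  constructor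
  · rintro ⟨-, -, h⟩
    exact ⟨ha, by tauto⟩
  · rintro ⟨-, h⟩
    exact ⟨hfour h, heven, by tauto⟩

theorem grundyThreeCriterion_two_mul {m : ℕ} (hm : 2 ≤ m) :
    GrundyThreeCriterion (2 * m) ↔ ¬ GrundyThreeCriterion m := by
  obtain ⟨a, u, hu, rfl⟩ := Nat.exists_eq_two_pow_mul_odd (n := m) (by omega)
  rw [← mul_assoc, ← pow_succ', grundyThreeCriterion_two_pow_mul hu,
    grundyThreeCriterion_two_pow_mul hu, Nat.even_add_one]
  obtain rfl | ha := Nat.eq_zero_or_pos a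
  · have hu1 : u ≠ 1 := by rintro rfl; simp at hm
    simp [hu1]
  · have : 1 ≤ a := ha
    tauto

open Classical in
noncomputable def sixMulGrundy (k : ℕ) : ℕ :=
  if k ≤ 1 then 0 else if GrundyThreeCriterion k then 3 else 2

theorem sixMulGrundy_eq_two_or_eq_three {k : ℕ} (hk : 2 ≤ k) :
    sixMulGrundy k = 2 ∨ sixMulGrundy k = 3 := by
  unfold sixMulGrundy
  split_ifs <;> omega

theorem sixMulGrundy_eq_three_iff (k : ℕ) : sixMulGrundy k = 3 ↔ GrundyThreeCriterion k := by
  unfold sixMulGrundy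
  split_ifs with hk h
  · exact ⟨fun h => absurd h (by norm_num), fun h => absurd h.1 (by omega)⟩
  · simp [h]
  · simp [h]

theorem sixMulGrundy_of_odd {k : ℕ} (hk : 2 ≤ k) (ho : Odd k) : sixMulGrundy k = 2 := by
  rw [sixMulGrundy, if_neg (by omega), if_neg (not_grundyThreeCriterion_of_odd ho)]

theorem sixMulGrundy_two_mul {t : ℕ} (ht : 2 ≤ t) :
    sixMulGrundy (2 * t) = 5 - sixMulGrundy t := by
  have h := grundyThreeCriterion_two_mul ht
  unfold sixMulGrundy
  split_ifs <;> first | omega | tauto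

noncomputable def grundyFormula (n : ℕ) : ℕ :=
  match n % 6 with
  | 0 => sixMulGrundy (n / 6)
  | 1 => 0
  | 2 | 3 => 1
  | 4 => if n = 4 then 2 else if n = 10 then 3 else 0
  | _ => 2

theorem grundyFormula_six_mul (k : ℕ) : grundyFormula (6 * k) = sixMulGrundy k := by
  simp [grundyFormula]

theorem grundyFormula_six_mul_add_two (k : ℕ) : grundyFormula (6 * k + 2) = 1 := by
  simp [grundyFormula]

theorem grundyFormula_six_mul_add_four {k : ℕ} (hk : 2 ≤ k) : grundyFormula (6 * k + 4) = 0 := by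
  simp [grundyFormula, show k ≠ 0 by omega, show k ≠ 1 by omega]

theorem grundyFormula_of_odd {n : ℕ} (hn : Odd n) : grundyFormula n = n % 6 / 2 := by
  rw [Nat.odd_iff] at hn
  obtain h | h | h : n % 6 = 1 ∨ n % 6 = 3 ∨ n % 6 = 5 := by omega
  all_goals simp [grundyFormula, h]

theorem grundyFormula_eq_mex_of_lt {n : ℕ} (hn : n < 24) :
    grundyFormula n = mex ((iMarkOptions {2, 4} {2} n).image grundyFormula) := by
  interval_cases n <;>
    simp [iMarkOptions, Finset.filter_insert, Finset.filter_singleton, grundyFormula,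
      sixMulGrundy, GrundyThreeCriterion] <;>
    exact (mex_eq_of_notMem_of_forall_lt_mem (by decide) (by decide)).symm

theorem grundyFormula_eq_mex_of_odd {n : ℕ} (hn : 4 ≤ n) (ho : Odd n) :
    grundyFormula n = mex ((iMarkOptions {2, 4} {2} n).image grundyFormula) := by
  have hmod := Nat.odd_iff.mp ho
  rw [iMarkOptions_24_2_of_odd hn ho, Finset.image_insert, Finset.image_singleton,
    grundyFormula_of_odd ho, grundyFormula_of_odd (Nat.odd_iff.mpr (by omega)),
    grundyFormula_of_odd (Nat.odd_iff.mpr (by omega))]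
  refine (mex_eq_of_notMem_of_forall_lt_mem ?_ fun j hj => ?_).symm <;> simp <;> omega

theorem grundyFormula_eq_mex_six_mul {k : ℕ} (hk : 3 ≤ k) :
    grundyFormula (6 * k) = mex ((iMarkOptions {2, 4} {2} (6 * k)).image grundyFormula) := by
  rw [iMarkOptions_24_2_of_even (by omega) ⟨3 * k, by ring⟩, Finset.image_insert,
    Finset.image_insert, Finset.image_singleton, show 6 * k - 2 = 6 * (k - 1) + 4 by omega,
    show 6 * k - 4 = 6 * (k - 1) + 2 by omega, grundyFormula_six_mul_add_four (by omega),
    grundyFormula_six_mul_add_two, grundyFormula_six_mul]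
  obtain ⟨t, rfl⟩ | ho := Nat.even_or_odd k
  · have ht : 2 ≤ t := by omega
    rw [show 6 * (t + t) / 2 = 6 * t by omega, grundyFormula_six_mul, ← two_mul,
      sixMulGrundy_two_mul ht]
    have := sixMulGrundy_eq_two_or_eq_three ht
    refine (mex_eq_of_notMem_of_forall_lt_mem ?_ fun j hj => ?_).symm <;> simp <;> omega
  · have hhalf : 6 * k / 2 % 6 = 3 := by rw [Nat.odd_iff] at ho; omega
    rw [grundyFormula_of_odd (Nat.odd_iff.mpr (by omega)), hhalf, sixMulGrundy_of_odd (by omega) ho]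
    exact (mex_eq_of_notMem_of_forall_lt_mem (by decide) (by decide)).symm

theorem grundyFormula_eq_mex_six_mul_add_two {k : ℕ} (hk : 4 ≤ k) :
    grundyFormula (6 * k + 2) =
      mex ((iMarkOptions {2, 4} {2} (6 * k + 2)).image grundyFormula) := by
  rw [iMarkOptions_24_2_of_even (by omega) ⟨3 * k + 1, by ring⟩, Finset.image_insert,
    Finset.image_insert, Finset.image_singleton, show 6 * k + 2 - 2 = 6 * k by omega,
    show 6 * k + 2 - 4 = 6 * (k - 1) + 4 by omega, grundyFormula_six_mul_add_four (by omega),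
    grundyFormula_six_mul_add_two, grundyFormula_six_mul]
  have hhalf : grundyFormula ((6 * k + 2) / 2) = 0 := by
    obtain ⟨t, rfl⟩ | ⟨t, rfl⟩ := Nat.even_or_odd k
    · rw [grundyFormula_of_odd (Nat.odd_iff.mpr (by omega))]
      omega
    · rw [show (6 * (2 * t + 1) + 2) / 2 = 6 * t + 4 by omega,
        grundyFormula_six_mul_add_four (by omega)]
  have := sixMulGrundy_eq_two_or_eq_three (show 2 ≤ k by omega)
  rw [hhalf]
  refine (mex_eq_of_notMem_of_forall_lt_mem ?_ fun j hj => ?_).symm <;> simp <;> omega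

theorem grundyFormula_eq_mex_six_mul_add_four {k : ℕ} (hk : 2 ≤ k) :
    grundyFormula (6 * k + 4) =
      mex ((iMarkOptions {2, 4} {2} (6 * k + 4)).image grundyFormula) := by
  rw [iMarkOptions_24_2_of_even (by omega) ⟨3 * k + 2, by ring⟩, Finset.image_insert,
    Finset.image_insert, Finset.image_singleton, show 6 * k + 4 - 2 = 6 * k + 2 by omega,
    show 6 * k + 4 - 4 = 6 * k by omega, grundyFormula_six_mul_add_four hk,
    grundyFormula_six_mul_add_two, grundyFormula_six_mul]
  have hhalf : grundyFormula ((6 * k + 4) / 2) ≠ 0 := by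
    obtain ⟨t, rfl⟩ | ⟨t, rfl⟩ := Nat.even_or_odd k
    · rw [show (6 * (t + t) + 4) / 2 = 6 * t + 2 by omega, grundyFormula_six_mul_add_two]
      omega
    · rw [grundyFormula_of_odd (Nat.odd_iff.mpr (by omega))]
      omega
  have := sixMulGrundy_eq_two_or_eq_three hk
  refine (mex_eq_of_notMem_of_forall_lt_mem ?_ fun j hj => ?_).symm <;> simp <;> omega

theorem grundyFormula_eq_mex (n : ℕ) :
    grundyFormula n = mex ((iMarkOptions {2, 4} {2} n).image grundyFormula) := by
  obtain hn | hn := lt_or_ge n 24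
  · exact grundyFormula_eq_mex_of_lt hn
  obtain ho | he := (Nat.even_or_odd n).symm
  · exact grundyFormula_eq_mex_of_odd (by omega) ho
  obtain ⟨k, rfl | rfl | rfl⟩ : ∃ k, n = 6 * k ∨ n = 6 * k + 2 ∨ n = 6 * k + 4 := by
    rw [Nat.even_iff] at he
    exact ⟨n / 6, by omega⟩
  · exact grundyFormula_eq_mex_six_mul (by omega)
  · exact grundyFormula_eq_mex_six_mul_add_two (by omega)
  · exact grundyFormula_eq_mex_six_mul_add_four (by omega)

theorem grundy_24_2_eq_grundyFormula : grundy {2, 4} {2} = grundyFormula :=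
  (eq_grundy_of_forall_eq_mex grundyFormula_eq_mex).symm

theorem iMark_24_2_grundy_eq_three_general (q : ℕ) :
    grundy {2, 4} {2} (6 * q) = 3 ↔ 4 ≤ q ∧ Even q ∧
      ((ordCompl[2] q = 1 ∧ Even (padicValNat 2 q)) ∨
       (ordCompl[2] q ≠ 1 ∧ Odd (padicValNat 2 q))) := by
  rw [grundy_24_2_eq_grundyFormula, grundyFormula_six_mul, sixMulGrundy_eq_three_iff]
  rfl

/-- Characterization of positions of g-value 3 in i-Mark({2,4},{2}). -/
theorem iMark_24_2_grundy_eq_three (q : ℕ) (hq : 2 ≤ q) :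
    grundy {2, 4} {2} (6 * q) = 3 ↔ 4 ≤ q ∧ Even q ∧
      ((ordCompl[2] q = 1 ∧ Even (padicValNat 2 q)) ∨
       (ordCompl[2] q ≠ 1 ∧ Odd (padicValNat 2 q))) :=
  iMark_24_2_grundy_eq_three_general q
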